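/- The relative entropy of coherence C_RE(ρ) = min over incoherent states σ of S(ρ||σ) equals S(ρ_d) - S(ρ), where ρ_d is the dephasing of ρ in the reference basis; i.e., the dephased state is the closest incoherent state in relative entropy. -/

import Mathlib

open scoped ComplexOrder
open Matrix

/-!
The eigenvalues of the diagonal matrix `ρ_d` are its diagonal entries `p i = ρ i i`, so `S(ρ_d)`
is the Shannon entropy of the probability vector `p`, and `S(ρ‖diag f) + S(ρ)` is the cross
entropy `-∑ i, p i * log (f i)`. By Gibbs' inequality the cross entropy is minimised at `f = p`.
-/

/-- Von Neumann entropy (base 2) of a Hermitian matrix, via its eigenvalues. -/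
noncomputable def vnEntropy {n : Type*} [Fintype n] [DecidableEq n]
    {ρ : Matrix n n ℂ} (hρ : ρ.IsHermitian) : ℝ :=
  -∑ i, hρ.eigenvalues i * Real.logb 2 (hρ.eigenvalues i)

namespace Real

variable {ι : Type*} {s : Finset ι} {p f : ι → ℝ}

lemma mul_log_le_mul_log_add_sub {p f : ℝ} (hp : 0 ≤ p) (hf : 0 ≤ f) (hsupp : f = 0 → p = 0) :
    p * log f ≤ p * log p + (f - p) := by
  rcases hp.eq_or_lt with rfl | hp
  · simpa using hf
  have hf : 0 < f := hf.lt_of_ne fun h => hp.ne' (hsupp h.symm)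
  calc p * log f = p * log p + p * log (f / p) := by
        rw [log_div hf.ne' hp.ne']; ring
    _ ≤ p * log p + p * (f / p - 1) := by
        gcongr; exact log_le_sub_one_of_pos (div_pos hf hp)
    _ = p * log p + (f - p) := by field_simp

lemma sum_mul_log_le_sum_mul_log (hp : ∀ i ∈ s, 0 ≤ p i) (hf : ∀ i ∈ s, 0 ≤ f i)
    (hsupp : ∀ i ∈ s, f i = 0 → p i = 0) (hsum : ∑ i ∈ s, f i ≤ ∑ i ∈ s, p i) :
    ∑ i ∈ s, p i * log (f i) ≤ ∑ i ∈ s, p i * log (p i) := by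
  have := Finset.sum_le_sum fun i hi =>
    mul_log_le_mul_log_add_sub (hp i hi) (hf i hi) (hsupp i hi)
  rw [Finset.sum_add_distrib, Finset.sum_sub_distrib] at this
  linarith

lemma sum_mul_logb_le_sum_mul_logb {b : ℝ} (hb : 1 < b) (hp : ∀ i ∈ s, 0 ≤ p i)
    (hf : ∀ i ∈ s, 0 ≤ f i) (hsupp : ∀ i ∈ s, f i = 0 → p i = 0)
    (hsum : ∑ i ∈ s, f i ≤ ∑ i ∈ s, p i) :
    ∑ i ∈ s, p i * logb b (f i) ≤ ∑ i ∈ s, p i * logb b (p i) := by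
  simp only [logb, mul_div_assoc', ← Finset.sum_div]
  exact div_le_div_of_nonneg_right (sum_mul_log_le_sum_mul_log hp hf hsupp hsum)
    (log_nonneg hb.le)

end Real

namespace Matrix.IsHermitian

variable {𝕜 n : Type*} [RCLike 𝕜] [Fintype n] [DecidableEq n]

lemma map_eigenvalues_diagonal {a : n → 𝕜} (ha : (diagonal a).IsHermitian) :
    Finset.univ.val.map (RCLike.ofReal ∘ ha.eigenvalues) = Finset.univ.val.map a := by
  rw [← ha.roots_charpoly_eq_eigenvalues, charpoly_diagonal, Polynomial.roots_prod]
  · simp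
  · simp [Finset.prod_ne_zero_iff, Polynomial.X_sub_C_ne_zero]

lemma sum_comp_eigenvalues_diagonal {a : n → 𝕜} (ha : (diagonal a).IsHermitian) (g : ℝ → ℝ) :
    ∑ i, g (ha.eigenvalues i) = ∑ i, g (RCLike.re (a i)) := by
  simpa [Multiset.map_map, Function.comp_def] using
    congrArg (fun m => (m.map (g ∘ RCLike.re)).sum) ha.map_eigenvalues_diagonal

end Matrix.IsHermitian

lemma vnEntropy_diagonal {n : Type*} [Fintype n] [DecidableEq n] {a : n → ℂ}
    (ha : (diagonal a).IsHermitian) :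
    vnEntropy ha = -∑ i, (a i).re * Real.logb 2 (a i).re :=
  congrArg Neg.neg (ha.sum_comp_eigenvalues_diagonal fun x => x * Real.logb 2 x)

theorem stmt11 (d : ℕ) (ρ : Matrix (Fin d) (Fin d) ℂ) (hρ : ρ.PosSemidef)
    (htr : ρ.trace = 1)
    (hdiag : (Matrix.diagonal fun i => ρ i i).IsHermitian) :
    IsLeast
      {x : ℝ | ∃ f : Fin d → ℝ, (∀ i, 0 ≤ f i) ∧ (∑ i, f i = 1) ∧
        (∀ i, f i = 0 → ρ i i = 0) ∧
        x = (-vnEntropy hρ.1) - ∑ i, (ρ i i).re * Real.logb 2 (f i)}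
      (vnEntropy hdiag - vnEntropy hρ.1) := by
  set p : Fin d → ℝ := fun i => (ρ i i).re with hp
  have hp0 : ∀ i, 0 ≤ p i := fun i => (Complex.nonneg_iff.mp hρ.diag_nonneg).1
  have hp1 : ∑ i, p i = 1 := by
    simpa [trace, Complex.re_sum] using congrArg Complex.re htr
  rw [vnEntropy_diagonal hdiag]
  refine ⟨⟨p, hp0, hp1, fun i hi => ?_, by ring⟩, ?_⟩
  · rw [← hρ.1.coe_re_apply_self i]
    simpa using congrArg ((↑) : ℝ → ℂ) hi
  · rintro x ⟨f, hf0, hf1, hsupp, rfl⟩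
    have := Real.sum_mul_logb_le_sum_mul_logb one_lt_two (fun i _ => hp0 i) (fun i _ => hf0 i)
      (fun i _ hi => by simp [hp, hsupp i hi]) (hf1.trans hp1.symm).le
    linarith
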